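/- arXiv:0911.1796 — 2 statements merged into one kernel-verified Lean document; each statement's English description precedes it below -/
import Mathlib

section
/- For every unit vector ψ in the n-partite Hilbert space H, the fidelity of separability of the pure state |ψ⟩⟨ψ| equals the squared maximal overlap with product states: F_sep(|ψ⟩⟨ψ|) = sup over product unit vectors φ of |⟨φ,ψ⟩|² = Λ_max(ψ)². In particular, in the maximization defining F_sep for a pure state one may restrict to pure product states. -/
/-!
For a pure state `ρ = |ψ⟩⟨ψ|` one has `√ρ = ρ` and `ρ σ ρ = ⟨ψ, σ ψ⟩ ρ`, so `F(ρ, σ) = ⟨ψ, σ ψ⟩`.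
For a separable `σ = ∑ pᵢ |φᵢ⟩⟨φᵢ|` this is the convex combination `∑ pᵢ |⟨φᵢ, ψ⟩|²`, which is
at most its largest term, while each term is itself the fidelity with the product state `|φᵢ⟩⟨φᵢ|`.
Hence `F_sep` is the supremum of the squared overlaps; by Cauchy–Schwarz these lie in `[0, 1]`,
and squaring, being monotone and continuous there, commutes with the supremum.
-/

open scoped BigOperators ComplexOrder

noncomputable section

/-- Inner product `⟨u,v⟩ = ∑ x, conj (u x) * v x` on functions `ι → ℂ`. -/
def inn {ι : Type*} [Fintype ι] (u v : ι → ℂ) : ℂ := ∑ x, star (u x) * v x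

/-- Unit vector. -/
def IsUnitVec {ι : Type*} [Fintype ι] (v : ι → ℂ) : Prop := inn v v = 1

/-- Rank-one projector `|v⟩⟨v|`. -/
def proj {ι : Type*} [Fintype ι] (v : ι → ℂ) : Matrix ι ι ℂ :=
  fun x y => v x * star (v y)

/-- Positive semidefinite square root (zero on non-PSD matrices). -/
def psqrt {ι : Type*} [Fintype ι] [DecidableEq ι] (A : Matrix ι ι ℂ) : Matrix ι ι ℂ :=
  open scoped Classical in if h : A.PosSemidef then
    (h.1.eigenvectorUnitary : Matrix ι ι ℂ) *
      Matrix.diagonal ((↑) ∘ (Real.sqrt ·) ∘ h.1.eigenvalues) *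
      (star h.1.eigenvectorUnitary : Matrix ι ι ℂ) else 0

/-- Fidelity `F(ρ,σ) = (Tr √(√ρ σ √ρ))²`. -/
def fid {ι : Type*} [Fintype ι] [DecidableEq ι] (ρ σ : Matrix ι ι ℂ) : ℝ :=
  ((psqrt (psqrt ρ * σ * psqrt ρ)).trace.re) ^ 2

/-- Product vector on the `n`-partite Hilbert space. -/
def IsProdVec {n : ℕ} {d : Fin n → ℕ} (v : (∀ j, Fin (d j)) → ℂ) : Prop :=
  ∃ f : ∀ j, Fin (d j) → ℂ, ∀ x, v x = ∏ j, f j (x j)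

/-- Separable state: finite convex combination of projectors onto product unit vectors. -/
def IsSepState {n : ℕ} {d : Fin n → ℕ}
    (σ : Matrix (∀ j, Fin (d j)) (∀ j, Fin (d j)) ℂ) : Prop :=
  ∃ (k : ℕ) (p : Fin k → ℝ) (φ : Fin k → (∀ j, Fin (d j)) → ℂ),
    (∀ i, 0 ≤ p i) ∧ ∑ i, p i = 1 ∧
    (∀ i, IsProdVec (φ i) ∧ IsUnitVec (φ i)) ∧
    σ = ∑ i, (p i : ℂ) • proj (φ i)

/-- Fidelity of separability. -/
def Fsep {n : ℕ} {d : Fin n → ℕ}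
    (ρ : Matrix (∀ j, Fin (d j)) (∀ j, Fin (d j)) ℂ) : ℝ :=
  sSup {x | ∃ σ, IsSepState σ ∧ x = fid ρ σ}

/-- Maximal overlap with product unit vectors. -/
def Lmax {n : ℕ} {d : Fin n → ℕ} (ψ : (∀ j, Fin (d j)) → ℂ) : ℝ :=
  sSup {x | ∃ φ, IsProdVec φ ∧ IsUnitVec φ ∧ x = ‖inn φ ψ‖}

open Matrix

section RankOne

variable {ι : Type*} [Fintype ι]

lemma proj_eq_vecMulVec (v : ι → ℂ) : proj v = vecMulVec v (star v) := rfl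

lemma proj_posSemidef (v : ι → ℂ) : (proj v).PosSemidef :=
  posSemidef_vecMulVec_self_star v

lemma star_inn (u v : ι → ℂ) : star (inn u v) = inn v u := by
  simp [inn, mul_comm]

lemma inn_sum {κ : Type*} (u : ι → ℂ) (s : Finset κ) (v : κ → ι → ℂ) :
    inn u (∑ i ∈ s, v i) = ∑ i ∈ s, inn u (v i) :=
  dotProduct_sum (star u) s v

lemma inn_smul (u v : ι → ℂ) (a : ℂ) : inn u (a • v) = a * inn u v :=
  dotProduct_smul a (star u) v

lemma proj_mulVec (v u : ι → ℂ) : proj v *ᵥ u = inn v u • v := by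
  rw [proj_eq_vecMulVec, vecMulVec_mulVec, op_smul_eq_smul]
  rfl

lemma proj_mul_mul_proj (ψ : ι → ℂ) (σ : Matrix ι ι ℂ) :
    proj ψ * σ * proj ψ = inn ψ (σ *ᵥ ψ) • proj ψ := by
  rw [proj_eq_vecMulVec, mul_vecMulVec, ← mulVec_mulVec, ← proj_eq_vecMulVec, proj_mulVec,
    smul_vecMulVec, proj_eq_vecMulVec]

lemma proj_mul_self {ψ : ι → ℂ} (hψ : IsUnitVec ψ) : proj ψ * proj ψ = proj ψ := by
  rw [proj_eq_vecMulVec, vecMulVec_mul_vecMulVec]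
  change vecMulVec ψ (inn ψ ψ • star ψ) = _
  rw [hψ, one_smul]

lemma trace_proj (ψ : ι → ℂ) : (proj ψ).trace = inn ψ ψ := by
  simp [Matrix.trace, proj, inn, mul_comm]

lemma inn_proj_mulVec (ψ φ : ι → ℂ) : inn ψ (proj φ *ᵥ ψ) = ((‖inn φ ψ‖ ^ 2 : ℝ) : ℂ) := by
  rw [proj_mulVec, inn_smul, ← star_inn φ ψ, Complex.star_def, Complex.mul_conj,
    Complex.normSq_eq_norm_sq]

lemma inn_sum_smul_proj_mulVec {κ : Type*} [Fintype κ] (ψ : ι → ℂ) (p : κ → ℝ)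
    (φ : κ → ι → ℂ) :
    inn ψ ((∑ i, (p i : ℂ) • proj (φ i)) *ᵥ ψ) = ((∑ i, p i * ‖inn (φ i) ψ‖ ^ 2 : ℝ) : ℂ) := by
  rw [sum_mulVec, inn_sum]
  push_cast
  simp only [smul_mulVec, inn_smul, inn_proj_mulVec, Complex.ofReal_pow]

lemma norm_inn_le_one {u v : ι → ℂ} (hu : IsUnitVec u) (hv : IsUnitVec v) : ‖inn u v‖ ≤ 1 := by
  have inn_eq_inner (w z : ι → ℂ) :
      inn w z = inner ℂ (WithLp.toLp 2 w : EuclideanSpace ℂ ι) (WithLp.toLp 2 z) := by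
    simp [inn, PiLp.inner_apply, mul_comm]
  have norm_eq_one {w : ι → ℂ} (hw : IsUnitVec w) :
      ‖(WithLp.toLp 2 w : EuclideanSpace ℂ ι)‖ = 1 := by
    have h := norm_sq_eq_re_inner (𝕜 := ℂ) (WithLp.toLp 2 w : EuclideanSpace ℂ ι)
    rw [← inn_eq_inner, hw, RCLike.one_re] at h
    exact (pow_eq_one_iff_of_nonneg (norm_nonneg _) two_ne_zero).mp h
  rw [inn_eq_inner]
  simpa [norm_eq_one hu, norm_eq_one hv] using norm_inner_le_norm (𝕜 := ℂ)
    (WithLp.toLp 2 u : EuclideanSpace ℂ ι) (WithLp.toLp 2 v)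

variable [DecidableEq ι]

-- `psqrt` is the continuous-functional-calculus square root written out in an eigenbasis.
open scoped MatrixOrder in
lemma psqrt_eq_of_mul_self {A B : Matrix ι ι ℂ} (hB : B.PosSemidef) (h : B * B = A) :
    psqrt A = B := by
  have hA : A.PosSemidef := h ▸ pow_two B ▸ hB.pow 2
  rw [psqrt, dif_pos hA]
  have e1 : (hA.1.eigenvectorUnitary : Matrix ι ι ℂ) *
      Matrix.diagonal ((↑) ∘ (Real.sqrt ·) ∘ hA.1.eigenvalues) *
      (star hA.1.eigenvectorUnitary : Matrix ι ι ℂ) = cfc Real.sqrt A := by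
    rw [hA.1.cfc_eq]; rfl
  rw [e1, ← cfcₙ_eq_cfc, ← CFC.sqrt_eq_real_sqrt A hA.nonneg]
  exact CFC.sqrt_unique h hB.nonneg

lemma fid_proj_left_of_inn_eq {ψ : ι → ℂ} (hψ : IsUnitVec ψ) {σ : Matrix ι ι ℂ} {c : ℝ}
    (hc : 0 ≤ c) (h : inn ψ (σ *ᵥ ψ) = c) : fid (proj ψ) σ = c := by
  have hsqrt_proj : psqrt (proj ψ) = proj ψ :=
    psqrt_eq_of_mul_self (proj_posSemidef ψ) (proj_mul_self hψ)
  have hsqrt : psqrt ((c : ℂ) • proj ψ) = (√c : ℂ) • proj ψ := by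
    refine psqrt_eq_of_mul_self
      ((proj_posSemidef ψ).smul (Complex.zero_le_real.mpr (Real.sqrt_nonneg c))) ?_
    rw [smul_mul_smul_comm, proj_mul_self hψ, ← Complex.ofReal_mul, Real.mul_self_sqrt hc]
  rw [fid, hsqrt_proj, proj_mul_mul_proj, h, hsqrt, trace_smul, trace_proj, hψ]
  simp [Real.sq_sqrt hc]

lemma fid_proj_sum_smul_proj {κ : Type*} [Fintype κ] {ψ : ι → ℂ} (hψ : IsUnitVec ψ)
    {p : κ → ℝ} (hp : ∀ i, 0 ≤ p i) (φ : κ → ι → ℂ) :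
    fid (proj ψ) (∑ i, (p i : ℂ) • proj (φ i)) = ∑ i, p i * ‖inn (φ i) ψ‖ ^ 2 :=
  fid_proj_left_of_inn_eq hψ (Finset.sum_nonneg fun i _ => mul_nonneg (hp i) (sq_nonneg _))
    (inn_sum_smul_proj_mulVec ψ p φ)

end RankOne

lemma exists_sum_mul_le_of_sum_eq_one {κ : Type*} [Fintype κ] {p : κ → ℝ} (hp : ∀ i, 0 ≤ p i)
    (hp1 : ∑ i, p i = 1) (b : κ → ℝ) : ∃ i, ∑ j, p j * b j ≤ b i := by
  have hle := Finset.centerMass_le_sup (s := Finset.univ) (f := b) (fun i _ => hp i)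
    (by rw [hp1]; exact one_pos)
  obtain ⟨i, -, hi⟩ := Finset.exists_mem_eq_sup' _ b
  rw [Finset.centerMass_eq_of_sum_1 _ _ hp1, hi] at hle
  exact ⟨i, hle⟩

lemma sSup_image_sq_of_nonneg {s : Set ℝ} (hs : ∀ x ∈ s, 0 ≤ x) (hbdd : BddAbove s) :
    sSup ((· ^ 2) '' s) = sSup s ^ 2 := by
  rcases s.eq_empty_or_nonempty with rfl | hne
  · simp
  exact (MonotoneOn.map_csSup_of_continuousWithinAt (continuous_pow 2).continuousWithinAt
    (pow_left_monotoneOn.mono hs) hne hbdd).symm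

section Multipartite

variable {n : ℕ} {d : Fin n → ℕ}

lemma isSepState_proj {φ : (∀ j, Fin (d j)) → ℂ} (hφ : IsProdVec φ) (hφ₁ : IsUnitVec φ) :
    IsSepState (proj φ) :=
  ⟨1, fun _ => 1, fun _ => φ, fun _ => zero_le_one, by simp, fun _ => ⟨hφ, hφ₁⟩, by simp⟩

theorem Fsep_proj_eq_sSup_sq_overlap {ψ : (∀ j, Fin (d j)) → ℂ} (hψ : IsUnitVec ψ) :
    Fsep (proj ψ) = sSup {x | ∃ φ, IsProdVec φ ∧ IsUnitVec φ ∧ x = ‖inn φ ψ‖ ^ 2} := by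
  refine csSup_eq_csSup_of_forall_exists_le ?_ ?_
  · rintro _ ⟨σ, ⟨k, p, φ, hp, hp1, hφ, rfl⟩, rfl⟩
    obtain ⟨i, hi⟩ := exists_sum_mul_le_of_sum_eq_one hp hp1 fun i => ‖inn (φ i) ψ‖ ^ 2
    exact ⟨_, ⟨φ i, (hφ i).1, (hφ i).2, rfl⟩, (fid_proj_sum_smul_proj hψ hp φ).trans_le hi⟩
  · rintro _ ⟨φ, hφ, hφ₁, rfl⟩
    refine ⟨_, ⟨proj φ, isSepState_proj hφ hφ₁, rfl⟩, ?_⟩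
    exact (fid_proj_left_of_inn_eq hψ (sq_nonneg _) (inn_proj_mulVec ψ φ)).ge

theorem sSup_sq_overlap_eq_Lmax_sq {ψ : (∀ j, Fin (d j)) → ℂ} (hψ : IsUnitVec ψ) :
    sSup {x | ∃ φ, IsProdVec φ ∧ IsUnitVec φ ∧ x = ‖inn φ ψ‖ ^ 2} = Lmax ψ ^ 2 := by
  have himage : {x | ∃ φ, IsProdVec φ ∧ IsUnitVec φ ∧ x = ‖inn φ ψ‖ ^ 2} =
      (· ^ 2) '' {x | ∃ φ, IsProdVec φ ∧ IsUnitVec φ ∧ x = ‖inn φ ψ‖} := by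
    ext x
    constructor
    · rintro ⟨φ, hφ, hφ₁, rfl⟩
      exact ⟨_, ⟨φ, hφ, hφ₁, rfl⟩, rfl⟩
    · rintro ⟨_, ⟨φ, hφ, hφ₁, rfl⟩, rfl⟩
      exact ⟨φ, hφ, hφ₁, rfl⟩
  rw [himage, Lmax]
  refine sSup_image_sq_of_nonneg ?_ ⟨1, ?_⟩
  · rintro _ ⟨φ, -, -, rfl⟩
    exact norm_nonneg _
  · rintro _ ⟨φ, -, hφ₁, rfl⟩
    exact norm_inn_le_one hφ₁ hψ

end Multipartite

theorem fsep_pure_eq_sq_max_overlap_general (n : ℕ) (d : Fin n → ℕ)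
    (ψ : (∀ j, Fin (d j)) → ℂ) (hψ : IsUnitVec ψ) :
    Fsep (proj ψ) =
      sSup {x | ∃ φ, IsProdVec φ ∧ IsUnitVec φ ∧ x = ‖inn φ ψ‖ ^ 2} ∧
    Fsep (proj ψ) = (Lmax ψ) ^ 2 :=
  ⟨Fsep_proj_eq_sSup_sq_overlap hψ,
    (Fsep_proj_eq_sSup_sq_overlap hψ).trans (sSup_sq_overlap_eq_Lmax_sq hψ)⟩

/-- for a pure state, the fidelity of separability is the squared maximal
overlap with product unit vectors, `F_sep(|ψ⟩⟨ψ|) = sup_φ |⟨φ,ψ⟩|² = Λ_max(ψ)²`. -/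
theorem fsep_pure_eq_sq_max_overlap (n : ℕ) (hn : 1 ≤ n) (d : Fin n → ℕ)
    (ψ : (∀ j, Fin (d j)) → ℂ) (hψ : IsUnitVec ψ) :
    Fsep (proj ψ) =
      sSup {x | ∃ φ, IsProdVec φ ∧ IsUnitVec φ ∧ x = ‖inn φ ψ‖ ^ 2} ∧
    Fsep (proj ψ) = (Lmax ψ) ^ 2 :=
  fsep_pure_eq_sq_max_overlap_general n d ψ hψ
end
end

section
/- Let ρ be a density matrix on a finite-dimensional complex Hilbert space H with a fixed decomposition ρ = ∑_{i<k} p_i |ψ_i⟩⟨ψ_i|, where p_i ≥ 0, ∑_{i<k} p_i = 1, and the ψ_i are unit vectors in H. Let ψ be any purification of ρ with ancilla dimension d_0 ≥ k. Then there exists an orthonormal family (ψ_i^{(0)})_{i<k} in ℂ^{d_0} such that ψ = ∑_{i<k} √(p_i) · ψ_i^{(0)} ⊗ ψ_i. -/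
/-!
Read `ψ` as the family of its ancilla columns `ψ(·, x) ∈ ℂ^{d₀}`, `x ∈ ι`. The purification
condition says that their Gram matrix is `ρᵀ`, and so is the Gram matrix of the columns of
`∑ᵢ √pᵢ eᵢ ⊗ ψᵢ`, where `eᵢ` are the first `k` standard basis vectors of `ℂ^{d₀}`. Two families
with the same Gram matrix differ by a linear isometry `U` of `ℂ^{d₀}` (an isometry between the
spans, extended to the whole space), so `wᵢ = U eᵢ` is the required orthonormal family.
-/

open scoped BigOperators

noncomputable section

open scoped InnerProductSpace Matrix

section

variable {𝕜 E F : Type*} [RCLike 𝕜] [NormedAddCommGroup E] [InnerProductSpace 𝕜 E]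
  [FiniteDimensional 𝕜 E]

theorem LinearMap.exists_linearIsometry_comp_eq_of_norm_eq [AddCommGroup F] [Module 𝕜 F]
    {f g : F →ₗ[𝕜] E} (h : ∀ x, ‖f x‖ = ‖g x‖) : ∃ U : E →ₗᵢ[𝕜] E, U.toLinearMap ∘ₗ g = f := by
  have hker : LinearMap.ker g ≤ LinearMap.ker f := fun x hx => by
    simpa [LinearMap.mem_ker, ← norm_eq_zero, h x] using hx
  let L : LinearMap.range g →ₗ[𝕜] E :=
    (LinearMap.ker g).liftQ f hker ∘ₗ g.quotKerEquivRange.symm.toLinearMap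
  have hL : ∀ x, L ⟨g x, LinearMap.mem_range_self g x⟩ = f x := fun x => by
    simp [L]
  let Liso : LinearMap.range g →ₗᵢ[𝕜] E := ⟨L, by rintro ⟨_, x, rfl⟩; simp [hL, h]⟩
  exact ⟨Liso.extend, LinearMap.ext fun x => (Liso.extend_apply ⟨g x, _⟩).trans (hL x)⟩

theorem exists_linearIsometry_apply_eq_of_gram_eq {ι : Type*} {v w : ι → E}
    (h : Matrix.gram 𝕜 v = Matrix.gram 𝕜 w) : ∃ U : E →ₗᵢ[𝕜] E, ∀ i, U (w i) = v i := by
  have hinner : ∀ i j, ⟪v i, v j⟫_𝕜 = ⟪w i, w j⟫_𝕜 := fun i j => by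
    simpa only [Matrix.gram_apply] using congrFun₂ h i j
  have hnorm : ∀ c : ι →₀ 𝕜,
      ‖Finsupp.linearCombination 𝕜 v c‖ = ‖Finsupp.linearCombination 𝕜 w c‖ := fun c => by
    simp only [@norm_eq_sqrt_re_inner 𝕜, Finsupp.linearCombination_apply, Finsupp.sum,
      sum_inner, inner_sum, inner_smul_left, inner_smul_right, hinner]
  obtain ⟨U, hU⟩ := LinearMap.exists_linearIsometry_comp_eq_of_norm_eq hnorm
  exact ⟨U, fun i => by simpa using LinearMap.congr_fun hU (Finsupp.single i 1)⟩

end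

theorem inn_eq_inner {ι : Type*} [Fintype ι] (u v : ι → ℂ) :
    inn u v = ⟪WithLp.toLp 2 u, WithLp.toLp 2 v⟫_ℂ := by
  simp [inn, PiLp.inner_apply, mul_comm]

def ancillaColumn {α ι : Type*} (ψ : α × ι → ℂ) (x : ι) : EuclideanSpace ℂ α :=
  WithLp.toLp 2 fun a => ψ (a, x)

theorem gram_ancillaColumn {α ι : Type*} [Fintype α] {ψ : α × ι → ℂ} {ρ : Matrix ι ι ℂ}
    (hpur : ∀ x y, ∑ a, ψ (a, x) * star (ψ (a, y)) = ρ x y) :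
    Matrix.gram ℂ (ancillaColumn ψ) = ρᵀ := by
  ext x y
  simp [ancillaColumn, PiLp.inner_apply, ← hpur]

theorem gram_sum_smul_orthonormal {κ ι E : Type*} [Fintype κ] [Fintype ι] [NormedAddCommGroup E]
    [InnerProductSpace ℂ E] {e : κ → E} (he : Orthonormal ℂ e) {p : κ → ℝ} (hp : ∀ i, 0 ≤ p i)
    (φ : κ → ι → ℂ) :
    Matrix.gram ℂ (fun x => ∑ i, ((Real.sqrt (p i) : ℂ) * φ i x) • e i) =
      (∑ i, (p i : ℂ) • proj (φ i))ᵀ := by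
  ext x y
  rw [Matrix.gram_apply, he.inner_sum]
  simp only [Matrix.transpose_apply, Matrix.sum_apply, Matrix.smul_apply, proj, smul_eq_mul]
  refine Finset.sum_congr rfl fun i _ => ?_
  have hsq : (Real.sqrt (p i) : ℂ) * Real.sqrt (p i) = p i := by
    exact_mod_cast Real.mul_self_sqrt (hp i)
  rw [map_mul, Complex.conj_ofReal, starRingEnd_apply]
  linear_combination (φ i y * star (φ i x)) * hsq

theorem purification_of_decomposition_general (ι : Type) [Fintype ι]
    (ρ : Matrix ι ι ℂ) (k d0 : ℕ) (hk : k ≤ d0)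
    (p : Fin k → ℝ) (hp : ∀ i, 0 ≤ p i)
    (ψs : Fin k → ι → ℂ)
    (hρ : ρ = ∑ i, (p i : ℂ) • proj (ψs i))
    (ψ : Fin d0 × ι → ℂ)
    (hpur : ∀ x y, ∑ a, ψ (a, x) * star (ψ (a, y)) = ρ x y) :
    ∃ w : Fin k → Fin d0 → ℂ,
      (∀ i j, inn (w i) (w j) = if i = j then 1 else 0) ∧
      ∀ a x, ψ (a, x) = ∑ i, (Real.sqrt (p i) : ℂ) * w i a * ψs i x := by
  let e : Fin k → EuclideanSpace ℂ (Fin d0) := fun i => EuclideanSpace.single (Fin.castLE hk i) 1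
  have he : Orthonormal ℂ e :=
    EuclideanSpace.orthonormal_single.comp _ (Fin.castLE_injective hk)
  have hgram : Matrix.gram ℂ (ancillaColumn ψ) =
      Matrix.gram ℂ (fun x => ∑ i, ((Real.sqrt (p i) : ℂ) * ψs i x) • e i) := by
    rw [gram_ancillaColumn hpur, gram_sum_smul_orthonormal he hp, hρ]
  obtain ⟨U, hU⟩ := exists_linearIsometry_apply_eq_of_gram_eq hgram
  refine ⟨fun i => U (e i), fun i j => ?_, fun a x => ?_⟩
  · rw [inn_eq_inner]
    exact orthonormal_iff_ite.mp (he.comp_linearIsometry U) i j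
  · have hx := congrArg (· a) (hU x)
    simp only [ancillaColumn, map_sum, map_smul] at hx
    rw [← hx, WithLp.ofLp_sum, Finset.sum_apply]
    exact Finset.sum_congr rfl fun i _ => by
      simp only [WithLp.ofLp_smul, Pi.smul_apply, smul_eq_mul]; ring

/-- every purification `ψ` (with ancilla dimension `d0 ≥ k`) of
`ρ = ∑ i, p i • |ψs i⟩⟨ψs i|` can be written as `ψ = ∑ i, √(p i) • w i ⊗ ψs i`
with an orthonormal family `w` of ancilla vectors. -/
theorem purification_of_decomposition (ι : Type) [Fintype ι] [DecidableEq ι]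
    (ρ : Matrix ι ι ℂ) (k d0 : ℕ) (hk : k ≤ d0)
    (p : Fin k → ℝ) (hp : ∀ i, 0 ≤ p i) (hp1 : ∑ i, p i = 1)
    (ψs : Fin k → ι → ℂ) (hψs : ∀ i, inn (ψs i) (ψs i) = 1)
    (hρ : ρ = ∑ i, (p i : ℂ) • proj (ψs i))
    (ψ : Fin d0 × ι → ℂ) (hψ : inn ψ ψ = 1)
    (hpur : ∀ x y, ∑ a, ψ (a, x) * star (ψ (a, y)) = ρ x y) :
    ∃ w : Fin k → Fin d0 → ℂ,
      (∀ i j, inn (w i) (w j) = if i = j then 1 else 0) ∧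
      ∀ a x, ψ (a, x) = ∑ i, (Real.sqrt (p i) : ℂ) * w i a * ψs i x :=
  purification_of_decomposition_general ι ρ k d0 hk p hp ψs hρ ψ hpur
end
end
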